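/- In the beer-quiche game with costly monitoring with cost c satisfying 0 < c < 1/10, the mixed strategy profile in which Anne plays 'beer regardless of type' with probability 1 − 10c and 'beer if strong, quiche if weak' with probability 10c, and Bob plays 'monitor; N after beer, F after quiche' with probability 1/2 and 'do not monitor; play N' with probability 1/2, is a Nash equilibrium, with expected payoffs 2.9 for Anne and 0.9 for Bob. -/

import Mathlib

/-!
STATEMENT 7: In the beer-quiche game with costly monitoring with `0 < c < 1/10`, the
profile where Anne plays "beer regardless of type" with probability `1 − 10c` and
"beer if strong, quiche if weak" with probability `10c`, while Bob plays
"monitor; N after beer, F after quiche" with probability `1/2` and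
"do not monitor; play N" with probability `1/2`, is a Nash equilibrium with expected
payoffs 2.9 for Anne and 0.9 for Bob.
-/

noncomputable section

/-- Anne's types: strong or weak. -/
inductive Ty | S | W
  deriving DecidableEq

instance : Fintype Ty := ⟨{Ty.S, Ty.W}, fun x => by cases x <;> simp⟩

/-- Messages: beer or quiche. -/
inductive Msg | B | Q
  deriving DecidableEq

instance : Fintype Msg := ⟨{Msg.B, Msg.Q}, fun x => by cases x <;> simp⟩

/-- Bob's actions: fight or not fight. -/
inductive Act | F | N
  deriving DecidableEq

instance : Fintype Act := ⟨{Act.F, Act.N}, fun x => by cases x <;> simp⟩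

open Ty Msg Act

/-- The prior over Anne's types. -/
def prior : Ty → ℝ
  | S => 0.9
  | W => 0.1

/-- Anne's payoff: 1 for her type's favorite breakfast plus 2 for not being dueled. -/
def payA (t : Ty) (m : Msg) (a : Act) : ℝ :=
  (if (t = S ∧ m = B) ∨ (t = W ∧ m = Q) then 1 else 0) +
    (if a = N then 2 else 0)

/-- Bob's payoff: 1 if he duels the weak type or spares the strong type. -/
def payB (t : Ty) (m : Msg) (a : Act) : ℝ :=
  if (t = W ∧ a = F) ∨ (t = S ∧ a = N) then 1 else 0

/-- A mixed strategy on a finite set `S` of pure strategies. -/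
def IsMixed {S : Type*} [Fintype S] (σ : S → ℝ) : Prop :=
  (∀ s, 0 ≤ σ s) ∧ ∑ s, σ s = 1

/-- Bob's (reduced) pure strategies in the game with costly monitoring:
`Sum.inl f` = "monitor with response plan `f`", `Sum.inr a` = "do not monitor, play `a`". -/
abbrev BobStrat := (Msg → Act) ⊕ Act

/-- The realized action of Bob's strategy on message `m`. -/
def act (b : BobStrat) (m : Msg) : Act :=
  match b with
  | Sum.inl f => f m
  | Sum.inr a => a

/-- The monitoring cost incurred by Bob's strategy. -/
def cost (c : ℝ) (b : BobStrat) : ℝ :=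
  match b with
  | Sum.inl _ => c
  | Sum.inr _ => 0

/-- Anne's expected payoff in the beer-quiche game with costly monitoring. -/
def EUA (σ1 : (Ty → Msg) → ℝ) (σ2 : BobStrat → ℝ) : ℝ :=
  ∑ t : Ty, ∑ s1 : Ty → Msg, ∑ b : BobStrat,
    prior t * σ1 s1 * σ2 b * payA t (s1 t) (act b (s1 t))

/-- Bob's expected payoff in the beer-quiche game with monitoring cost `c`. -/
def EUB (c : ℝ) (σ1 : (Ty → Msg) → ℝ) (σ2 : BobStrat → ℝ) : ℝ :=
  ∑ t : Ty, ∑ s1 : Ty → Msg, ∑ b : BobStrat,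
    prior t * σ1 s1 * σ2 b * (payB t (s1 t) (act b (s1 t)) - cost c b)

/-- Nash equilibrium of the beer-quiche game with monitoring cost `c`. -/
def IsNashC (c : ℝ) (σ1 : (Ty → Msg) → ℝ) (σ2 : BobStrat → ℝ) : Prop :=
  IsMixed σ1 ∧ IsMixed σ2 ∧
    (∀ σ1', IsMixed σ1' → EUA σ1' σ2 ≤ EUA σ1 σ2) ∧
    (∀ σ2', IsMixed σ2' → EUB c σ1 σ2' ≤ EUB c σ1 σ2)

/-- Anne's pooling strategy "beer regardless of type". -/
def sBB : Ty → Msg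
  | _ => B

/-- Anne's separating strategy "beer if strong, quiche if weak". -/
def sBQ : Ty → Msg
  | S => B
  | W => Q

/-- Bob's monitoring plan "N after beer, F after quiche". -/
def sNF : Msg → Act
  | B => N
  | Q => F

/- auxiliary pure strategies -/
def sQB : Ty → Msg | S => Q | W => B
def sQQ : Ty → Msg | _ => Q
def fNN : Msg → Act | _ => N
def fFF : Msg → Act | _ => F
def fFN : Msg → Act | B => F | Q => N

lemma sum_ty (f : Ty → ℝ) : ∑ t, f t = f S + f W := by
  rw [show (Finset.univ : Finset Ty) = {S, W} by decide]
  simp [Finset.sum_pair]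

lemma sum_act (f : Act → ℝ) : ∑ a, f a = f F + f N := by
  rw [show (Finset.univ : Finset Act) = {F, N} by decide]
  simp [Finset.sum_pair]

lemma sum_tyfun (g : (Ty → Msg) → ℝ) : ∑ s, g s = g sBB + g sBQ + g sQB + g sQQ := by
  rw [show (Finset.univ : Finset (Ty → Msg)) = {sBB, sBQ, sQB, sQQ} by decide]
  rw [Finset.sum_insert (by decide), Finset.sum_insert (by decide),
    Finset.sum_pair (by decide)]
  ring

lemma sum_msgfun (g : (Msg → Act) → ℝ) : ∑ f, g f = g sNF + g fNN + g fFF + g fFN := by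
  rw [show (Finset.univ : Finset (Msg → Act)) = {sNF, fNN, fFF, fFN} by decide]
  rw [Finset.sum_insert (by decide), Finset.sum_insert (by decide),
    Finset.sum_pair (by decide)]
  ring

set_option maxHeartbeats 1600000 in
/-- For `0 < c < 1/10` the mixed profile in which Anne pools on beer
with probability `1 − 10c` and separates with probability `10c`, and Bob monitors
with plan `sNF` with probability `1/2` and stays unmonitored playing `N` with
probability `1/2`, is a Nash equilibrium with payoffs `(2.9, 0.9)`. -/
theorem mixed_equilibrium_with_monitoring (c : ℝ) (hc : 0 < c) (hc' : c < 1 / 10)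
    (σ1 : (Ty → Msg) → ℝ) (σ2 : BobStrat → ℝ)
    (hσ1 : σ1 = fun s1 =>
      if s1 = sBB then 1 - 10 * c else if s1 = sBQ then 10 * c else 0)
    (hσ2 : σ2 = fun b =>
      if b = Sum.inl sNF then 1 / 2 else if b = Sum.inr N then 1 / 2 else 0) :
    IsNashC c σ1 σ2 ∧ EUA σ1 σ2 = 2.9 ∧ EUB c σ1 σ2 = 0.9 := by
  subst hσ1 hσ2
  have hEA : EUA (fun s1 => if s1 = sBB then 1 - 10 * c else if s1 = sBQ then 10 * c else 0)
      (fun b => if b = Sum.inl sNF then 1 / 2 else if b = Sum.inr N then 1 / 2 else 0) = 2.9 := by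
    simp only [EUA, sum_ty, sum_tyfun, Fintype.sum_sum_type, sum_msgfun, sum_act,
      payA, prior, act, sBB, sBQ, sQB, sQQ, sNF, fNN, fFF, fFN]
    norm_num [show sBQ ≠ sBB from by decide, show sQB ≠ sBB from by decide,
      show sQB ≠ sBQ from by decide, show sQQ ≠ sBB from by decide,
      show sQQ ≠ sBQ from by decide, show fNN ≠ sNF from by decide,
      show fFF ≠ sNF from by decide, show fFN ≠ sNF from by decide,
      show ∀ f : Msg → Act, (Sum.inl f : BobStrat) ≠ Sum.inr N from by decide,
      show ∀ a : Act, (Sum.inr a : BobStrat) ≠ Sum.inl sNF from by decide,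
      show F ≠ N from by decide, show N ≠ F from by decide, show S ≠ W from by decide,
      show W ≠ S from by decide, show B ≠ Q from by decide, show Q ≠ B from by decide]
    ring
  have hEB : EUB c (fun s1 => if s1 = sBB then 1 - 10 * c else if s1 = sBQ then 10 * c else 0)
      (fun b => if b = Sum.inl sNF then 1 / 2 else if b = Sum.inr N then 1 / 2 else 0) = 0.9 := by
    simp only [EUB, sum_ty, sum_tyfun, Fintype.sum_sum_type, sum_msgfun, sum_act,
      payB, prior, act, cost, sBB, sBQ, sQB, sQQ, sNF, fNN, fFF, fFN]
    norm_num [show sBQ ≠ sBB from by decide, show sQB ≠ sBB from by decide,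
      show sQB ≠ sBQ from by decide, show sQQ ≠ sBB from by decide,
      show sQQ ≠ sBQ from by decide, show fNN ≠ sNF from by decide,
      show fFF ≠ sNF from by decide, show fFN ≠ sNF from by decide,
      show ∀ f : Msg → Act, (Sum.inl f : BobStrat) ≠ Sum.inr N from by decide,
      show ∀ a : Act, (Sum.inr a : BobStrat) ≠ Sum.inl sNF from by decide,
      show F ≠ N from by decide, show N ≠ F from by decide, show S ≠ W from by decide,
      show W ≠ S from by decide, show B ≠ Q from by decide, show Q ≠ B from by decide]
    ring
  refine ⟨⟨⟨?_, ?_⟩, ⟨?_, ?_⟩, ?_, ?_⟩, hEA, hEB⟩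
  · intro s
    by_cases h1 : s = sBB <;> by_cases h2 : s = sBQ <;> simp [h1, h2, show sBQ ≠ sBB from by decide] <;> nlinarith
  · rw [sum_tyfun]
    norm_num [show sBQ ≠ sBB by decide, show sQB ≠ sBB by decide, show sQB ≠ sBQ by decide,
      show sQQ ≠ sBB by decide, show sQQ ≠ sBQ by decide]
  · intro b
    rcases b with f | a <;> simp <;> split <;> norm_num
  · rw [Fintype.sum_sum_type, sum_msgfun, sum_act]
    norm_num [show fNN ≠ sNF by decide, show fFF ≠ sNF by decide, show fFN ≠ sNF by decide,
      show ∀ f : Msg → Act, (Sum.inl f : BobStrat) ≠ Sum.inr N from by decide,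
      show ∀ a : Act, (Sum.inr a : BobStrat) ≠ Sum.inl sNF from by decide,
      show F ≠ N from by decide]
  · intro σ1' ⟨hpos, hsum⟩
    rw [hEA]
    rw [sum_tyfun] at hsum
    have h1 := hpos sBB; have h2 := hpos sBQ; have h3 := hpos sQB; have h4 := hpos sQQ
    simp only [EUA, sum_ty, sum_tyfun, Fintype.sum_sum_type, sum_msgfun, sum_act,
      payA, prior, act, sBB, sBQ, sQB, sQQ, sNF, fNN, fFF, fFN]
    norm_num [show sBQ ≠ sBB from by decide, show sQB ≠ sBB from by decide,
      show sQB ≠ sBQ from by decide, show sQQ ≠ sBB from by decide,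
      show sQQ ≠ sBQ from by decide, show fNN ≠ sNF from by decide,
      show fFF ≠ sNF from by decide, show fFN ≠ sNF from by decide,
      show ∀ f : Msg → Act, (Sum.inl f : BobStrat) ≠ Sum.inr N from by decide,
      show ∀ a : Act, (Sum.inr a : BobStrat) ≠ Sum.inl sNF from by decide,
      show F ≠ N from by decide, show N ≠ F from by decide, show S ≠ W from by decide,
      show W ≠ S from by decide, show B ≠ Q from by decide, show Q ≠ B from by decide]
    nlinarith [h1, h2, h3, h4, hsum]
  · intro σ2' ⟨hpos, hsum⟩
    rw [hEB]
    rw [Fintype.sum_sum_type, sum_msgfun, sum_act] at hsum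
    have h1 := hpos (Sum.inl sNF); have h2 := hpos (Sum.inl fNN)
    have h3 := hpos (Sum.inl fFF); have h4 := hpos (Sum.inl fFN)
    have h5 := hpos (Sum.inr F); have h6 := hpos (Sum.inr N)
    simp only [EUB, sum_ty, sum_tyfun, Fintype.sum_sum_type, sum_msgfun, sum_act,
      payB, prior, act, cost, sBB, sBQ, sQB, sQQ, sNF, fNN, fFF, fFN]
    norm_num [show sBQ ≠ sBB from by decide, show sQB ≠ sBB from by decide,
      show sQB ≠ sBQ from by decide, show sQQ ≠ sBB from by decide,
      show sQQ ≠ sBQ from by decide, show fNN ≠ sNF from by decide,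
      show fFF ≠ sNF from by decide, show fFN ≠ sNF from by decide,
      show ∀ f : Msg → Act, (Sum.inl f : BobStrat) ≠ Sum.inr N from by decide,
      show ∀ a : Act, (Sum.inr a : BobStrat) ≠ Sum.inl sNF from by decide,
      show F ≠ N from by decide, show N ≠ F from by decide, show S ≠ W from by decide,
      show W ≠ S from by decide, show B ≠ Q from by decide, show Q ≠ B from by decide]
    nlinarith [h1, h2, h3, h4, h5, h6, hsum, hc, hc']


end
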